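/- arXiv:1010.3174 — 5 statements merged into one kernel-verified Lean document; each statement's English description precedes it below -/
import Mathlib

section
/- Let D be a 2n-sided polygon with sides alternately labeled X and Y, and let Γ be a collection of pairwise disjoint, pairwise non-parallel diagonals of D. Then some X-labeled side of D meets at most eight diagonals of Γ. -/
/-!
Each diagonal meets at most two `X` sides, so if every one of the `n` sides labeled `X` met
nine diagonals there would be at least `9n/2` diagonals. But a family of distinct,
pairwise non-crossing chords `a < b` on a set of `m` points has at most `2m` members: the chords
that are the longest one from their left endpoint are determined by that endpoint, and every
other chord `(a, b)` is determined by `b`, since two such chords `(a, b)`, `(a', b)` with `a < a'`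
would make `(a, b)` cross the longer chord leaving `a'`. With `m = 2n` this gives at most `4n`.
-/

open Finset

section NoncrossingChords

variable {α : Type*} [LinearOrder α] {S : Finset α} {Γ : Finset (α × α)}

theorem card_filter_not_exists_longer_le (hS : ∀ p ∈ Γ, p.1 ∈ S) :
    #{p ∈ Γ | ¬∃ q ∈ Γ, q.1 = p.1 ∧ p.2 < q.2} ≤ #S := by
  refine card_le_card_of_injOn Prod.fst (fun p hp => hS p (mem_filter.1 hp).1) ?_
  intro p hp p' hp' hfst
  simp only [coe_filter, Set.mem_ofPred_eq, not_exists, not_and, not_lt] at hp hp'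
  exact Prod.ext hfst (le_antisymm (hp'.2 p hp.1 hfst) (hp.2 p' hp'.1 hfst.symm))

theorem card_filter_exists_longer_le (hS : ∀ p ∈ Γ, p.2 ∈ S) (hlt : ∀ p ∈ Γ, p.1 < p.2)
    (hnoncross : ∀ p ∈ Γ, ∀ q ∈ Γ, ¬(p.1 < q.1 ∧ q.1 < p.2 ∧ p.2 < q.2)) :
    #{p ∈ Γ | ∃ q ∈ Γ, q.1 = p.1 ∧ p.2 < q.2} ≤ #S := by
  refine card_le_card_of_injOn Prod.snd (fun p hp => hS p (mem_filter.1 hp).1) ?_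
  have fst_le_of_snd_eq : ∀ p ∈ Γ, ∀ p' ∈ Γ, (∃ q ∈ Γ, q.1 = p'.1 ∧ p'.2 < q.2) →
      p.2 = p'.2 → p'.1 ≤ p.1 := by
    rintro p hp p' hp' ⟨q, hq, hq₁, hq₂⟩ hsnd
    by_contra! h₁
    exact hnoncross p hp q hq ⟨hq₁ ▸ h₁, hq₁ ▸ hsnd ▸ hlt p' hp', hsnd ▸ hq₂⟩
  intro p hp p' hp' hsnd
  simp only [coe_filter, Set.mem_ofPred_eq] at hp hp'
  have hfst : p.1 = p'.1 :=
    le_antisymm (fst_le_of_snd_eq p' hp'.1 p hp.1 hp.2 hsnd.symm)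
      (fst_le_of_snd_eq p hp.1 p' hp'.1 hp'.2 hsnd)
  exact Prod.ext hfst hsnd

theorem card_le_two_mul_of_noncrossing (hS : ∀ p ∈ Γ, p.1 ∈ S ∧ p.2 ∈ S)
    (hlt : ∀ p ∈ Γ, p.1 < p.2)
    (hnoncross : ∀ p ∈ Γ, ∀ q ∈ Γ, ¬(p.1 < q.1 ∧ q.1 < p.2 ∧ p.2 < q.2)) :
    #Γ ≤ 2 * #S := by
  rw [← card_filter_add_card_filter_not (fun p => ∃ q ∈ Γ, q.1 = p.1 ∧ p.2 < q.2)]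
  have := card_filter_exists_longer_le (fun p hp => (hS p hp).2) hlt hnoncross
  have := card_filter_not_exists_longer_le (fun p hp => (hS p hp).1)
  omega

end NoncrossingChords

theorem card_filter_eq_or_eq_le_two {ι β : Type*} [DecidableEq β] {f : ι → β}
    (hf : Function.Injective f) (s : Finset ι) (a b : β) : #{i ∈ s | a = f i ∨ b = f i} ≤ 2 :=
  calc #{i ∈ s | a = f i ∨ b = f i}
      ≤ #({a, b} : Finset β) := card_le_card_of_injOn f (fun i hi => by
        simp only [coe_filter, Set.mem_ofPred_eq] at hi
        simpa [eq_comm] using hi.2) hf.injOn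
    _ ≤ 2 := card_le_two

/-- Let the sides of a `2n`-gon be labeled alternately `X` and `Y`
(the `X` sides are those with even index `2i`, `i < n`).  If `Γ` is a collection
of pairwise disjoint (non-crossing), pairwise non-parallel diagonals — modeled as
ordered pairs `(a, b)` with `a < b < 2n` of distinct sides, no two chords strictly
interleaving — then some `X` side meets at most eight diagonals of `Γ`. -/
theorem polygon_some_X_side_meets_at_most_eight (n : ℕ) (hn : 1 ≤ n)
    (Γ : Finset (ℕ × ℕ))
    (hmem : ∀ p ∈ Γ, p.1 < p.2 ∧ p.2 < 2 * n)
    (hnoncross : ∀ p ∈ Γ, ∀ q ∈ Γ, p ≠ q →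
      ¬(p.1 < q.1 ∧ q.1 < p.2 ∧ p.2 < q.2) ∧
      ¬(q.1 < p.1 ∧ p.1 < q.2 ∧ q.2 < p.2)) :
    ∃ i : ℕ, i < n ∧
      (Γ.filter (fun p => p.1 = 2 * i ∨ p.2 = 2 * i)).card ≤ 8 := by
  by_contra! hcrowded
  have hcard : #Γ ≤ 2 * #(range (2 * n)) := by
    refine card_le_two_mul_of_noncrossing (fun p hp => ?_) (fun p hp => (hmem p hp).1)
      (fun p hp q hq => ?_)
    · have := hmem p hp
      simp only [mem_range]
      omega
    · by_cases hpq : p = q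
      · subst hpq
        exact fun h => lt_irrefl _ h.1
      · exact (hnoncross p hp q hq hpq).1
  have hcount := card_mul_le_card_mul (s := range n) (t := Γ) (m := 9) (n := 2)
    (fun (i : ℕ) (p : ℕ × ℕ) => p.1 = 2 * i ∨ p.2 = 2 * i)
    (fun i hi => hcrowded i (mem_range.1 hi))
    (fun p _ => card_filter_eq_or_eq_le_two (mul_right_injective₀ two_ne_zero) _ _ _)
  rw [card_range] at hcard hcount
  omega
end

section
/- Let X be a δ-hyperbolic geodesic metric space, k a geodesic segment in X, and z, z' ∈ X with d(z, z') ≤ R. Then d(ρ_k(z), ρ_k(z')) ≤ R + 6δ, i.e., any closest point on k to z and any closest point on k to z' are at distance at most R + 6δ. -/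
open Metric Set

/-- A unit-speed geodesic segment, parametrized by arclength on `[0, L]`. -/
def IsGeodesicOn {X : Type*} [MetricSpace X] (f : ℝ → X) (L : ℝ) : Prop :=
  0 ≤ L ∧ ∀ s ∈ Set.Icc (0 : ℝ) L, ∀ t ∈ Set.Icc (0 : ℝ) L,
    dist (f s) (f t) = |s - t|

/-- The image of a geodesic segment. -/
def geodSet {X : Type*} [MetricSpace X] (f : ℝ → X) (L : ℝ) : Set X :=
  f '' Set.Icc 0 L

/-- A geodesic metric space: any two points are joined by a geodesic. -/
def GeodesicSpace (X : Type*) [MetricSpace X] : Prop :=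
  ∀ x y : X, ∃ f : ℝ → X, IsGeodesicOn f (dist x y) ∧ f 0 = x ∧ f (dist x y) = y

/-- `δ`-hyperbolicity: every geodesic triangle is `δ`-slim, i.e. each side is
contained in the `δ`-neighborhood of the union of the other two sides. -/
def SlimTriangles (X : Type*) [MetricSpace X] (δ : ℝ) : Prop :=
  ∀ (fk fg fh : ℝ → X) (Lk Lg Lh : ℝ),
    IsGeodesicOn fk Lk → IsGeodesicOn fg Lg → IsGeodesicOn fh Lh →
    fk Lk = fg 0 → fg Lg = fh 0 → fh Lh = fk 0 →
    (∀ p ∈ geodSet fk Lk, ∃ q ∈ geodSet fg Lg ∪ geodSet fh Lh, dist p q ≤ δ) ∧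
    (∀ p ∈ geodSet fg Lg, ∃ q ∈ geodSet fh Lh ∪ geodSet fk Lk, dist p q ≤ δ) ∧
    (∀ p ∈ geodSet fh Lh, ∃ q ∈ geodSet fk Lk ∪ geodSet fg Lg, dist p q ≤ δ)

/-- The set of closest points on `K` to `z`. -/
def closestPoints {X : Type*} [MetricSpace X] (K : Set X) (z : X) : Set X :=
  {w ∈ K | ∀ v ∈ K, dist z w ≤ dist z v}

lemma subgeod {X : Type*} [MetricSpace X] {f : ℝ → X} {L : ℝ} (hf : IsGeodesicOn f L)
    {a b : ℝ} (ha : a ∈ Set.Icc (0:ℝ) L) (hb : b ∈ Set.Icc (0:ℝ) L) :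
    ∃ g : ℝ → X, IsGeodesicOn g (dist (f a) (f b)) ∧ g 0 = f a ∧
      g (dist (f a) (f b)) = f b ∧
      ∀ t ∈ Set.Icc (0:ℝ) (dist (f a) (f b)), g t ∈ geodSet f L := by
  obtain ⟨hL, hiso⟩ := hf
  have hd : dist (f a) (f b) = |a - b| := hiso a ha b hb
  obtain ⟨ha0, haL⟩ := ha
  obtain ⟨hb0, hbL⟩ := hb
  rcases le_total a b with hab | hab
  · have habs : dist (f a) (f b) = b - a := by
      rw [hd, abs_sub_comm, abs_of_nonneg (by linarith)]
    refine ⟨fun t => f (a + t), ⟨by rw [habs]; linarith, ?_⟩, by simp, ?_, ?_⟩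
    · intro s hs t ht
      rw [habs] at hs ht
      have := hiso (a + s) ⟨by linarith [hs.1], by linarith [hs.2]⟩
        (a + t) ⟨by linarith [ht.1], by linarith [ht.2]⟩
      simpa using this
    · simp only [habs]
      norm_num
    · intro t ht
      rw [habs] at ht
      exact ⟨a + t, ⟨by linarith [ht.1], by linarith [ht.2]⟩, rfl⟩
  · have habs : dist (f a) (f b) = a - b := by
      rw [hd, abs_of_nonneg (by linarith)]
    refine ⟨fun t => f (a - t), ⟨by rw [habs]; linarith, ?_⟩, by simp, ?_, ?_⟩
    · intro s hs t ht
      rw [habs] at hs ht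
      have := hiso (a - s) ⟨by linarith [hs.2], by linarith [hs.1]⟩
        (a - t) ⟨by linarith [ht.2], by linarith [ht.1]⟩
      rw [this, abs_sub_comm]
      ring_nf
    · simp only [habs]
      norm_num
    · intro t ht
      rw [habs] at ht
      exact ⟨a - t, ⟨by linarith [ht.2], by linarith [ht.1]⟩, rfl⟩

lemma closest_point_dist_lower {X : Type*} [MetricSpace X] (δ : ℝ) (hδ : 0 ≤ δ)
    (hgeo : GeodesicSpace X) (hslim : SlimTriangles X δ)
    (f : ℝ → X) (L : ℝ) (hf : IsGeodesicOn f L)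
    (z w : X) (hw : w ∈ closestPoints (geodSet f L) z)
    (y : X) (hy : y ∈ geodSet f L) :
    dist z w + dist w y - 4 * δ ≤ dist z y := by
  obtain ⟨hwK, hwmin⟩ := hw
  rcases le_or_gt (dist w y) (2 * δ) with hwy | hwy
  · have := hwmin y hy
    linarith
  · apply le_of_forall_pos_le_add
    intro ε hε
    set ε' : ℝ := min ε (dist w y - 2 * δ) with hε'def
    have hε'pos : 0 < ε' := lt_min hε (by linarith)
    have hε'le : ε' ≤ ε := min_le_left _ _
    have hε'le2 : 2 * δ + ε' ≤ dist w y := by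
      have := min_le_right ε (dist w y - 2 * δ)
      linarith
    -- side k : z → w
    obtain ⟨fk, hfk, hfk0, hfkL⟩ := hgeo z w
    -- side g : w → y, a subsegment of f
    obtain ⟨a, ha, hfa⟩ := hwK
    obtain ⟨b, hb, hfb⟩ := hy
    obtain ⟨fg, hfg, hfg0, hfgL, hfgsub⟩ := subgeod ⟨hf.1, hf.2⟩ ha hb
    rw [hfa, hfb] at hfg
    rw [hfa] at hfg0
    rw [hfa, hfb] at hfgL
    rw [hfa, hfb] at hfgsub
    -- side h : y → z
    obtain ⟨fh, hfh, hfh0, hfhL⟩ := hgeo y z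
    obtain ⟨-, h2, -⟩ := hslim fk fg fh (dist z w) (dist w y) (dist y z)
      hfk hfg hfh (by rw [hfkL, hfg0]) (by rw [hfgL, hfh0]) (by rw [hfhL, hfk0])
    -- the point m on side g at distance 2δ + ε' from w
    have hmem : (2 * δ + ε') ∈ Set.Icc (0:ℝ) (dist w y) :=
      ⟨by linarith, hε'le2⟩
    set m : X := fg (2 * δ + ε') with hm
    have hwm : dist w m = 2 * δ + ε' := by
      have h := hfg.2 0 ⟨le_refl 0, hfg.1⟩ (2 * δ + ε') hmem
      rw [hfg0] at h
      rw [hm, h, zero_sub, abs_neg, abs_of_nonneg (by linarith)]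
    have hmy : dist m y = dist w y - (2 * δ + ε') := by
      have h := hfg.2 (2 * δ + ε') hmem (dist w y) ⟨hfg.1, le_refl _⟩
      rw [hfgL] at h
      rw [hm, h, abs_of_nonpos (by linarith)]
      ring
    have hmK : m ∈ geodSet f L := hfgsub _ hmem
    have hzm : dist z w ≤ dist z m := hwmin m hmK
    obtain ⟨q, hq, hqd⟩ := h2 m ⟨2 * δ + ε', hmem, rfl⟩
    rcases hq with hq | hq
    · -- q on side h : y → z
      obtain ⟨s, hs, rfl⟩ := hq
      have hyq : dist y (fh s) = s := by
        have h := hfh.2 0 ⟨le_refl 0, hfh.1⟩ s hs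
        rw [hfh0] at h
        rw [h, zero_sub, abs_neg, abs_of_nonneg hs.1]
      have hqz : dist (fh s) z = dist y z - s := by
        have h := hfh.2 s hs (dist y z) ⟨hfh.1, le_refl _⟩
        rw [hfhL] at h
        rw [h, abs_of_nonpos (by linarith [hs.2])]
        ring
      have h1 : dist z m ≤ dist z (fh s) + δ := by
        have := dist_triangle z (fh s) m
        rw [dist_comm (fh s) m] at this
        linarith
      have h2' : dist m y ≤ dist m (fh s) + dist (fh s) y := dist_triangle _ _ _
      have : dist z y = dist z (fh s) + dist (fh s) y := by
        rw [dist_comm z (fh s), dist_comm (fh s) y, dist_comm z y]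
        rw [hyq, hqz]; ring
      linarith
    · -- q on side k : z → w : contradiction
      obtain ⟨s, hs, rfl⟩ := hq
      have hzq : dist z (fk s) = s := by
        have h := hfk.2 0 ⟨le_refl 0, hfk.1⟩ s hs
        rw [hfk0] at h
        rw [h, zero_sub, abs_neg, abs_of_nonneg hs.1]
      have hqw : dist (fk s) w = dist z w - s := by
        have h := hfk.2 s hs (dist z w) ⟨hfk.1, le_refl _⟩
        rw [hfkL] at h
        rw [h, abs_of_nonpos (by linarith [hs.2])]
        ring
      have h1 : dist z m ≤ dist z (fk s) + δ := by
        have := dist_triangle z (fk s) m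
        rw [dist_comm (fk s) m] at this
        linarith
      have h3 : dist w m ≤ dist w (fk s) + dist (fk s) m := dist_triangle _ _ _
      rw [dist_comm w (fk s)] at h3
      rw [dist_comm (fk s) m] at h3
      linarith

/-- In a `δ`-hyperbolic geodesic metric space, if `d(z, z') ≤ R`
then any closest point on a geodesic `k` to `z` and any closest point on `k`
to `z'` are at distance at most `R + 6δ`. -/
theorem closestPoints_move_point {X : Type*} [MetricSpace X] (δ : ℝ) (hδ : 0 ≤ δ)
    (hgeo : GeodesicSpace X) (hslim : SlimTriangles X δ)
    (f : ℝ → X) (L : ℝ) (hf : IsGeodesicOn f L)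
    (z z' : X) (R : ℝ) (hR : dist z z' ≤ R) :
    ∀ w ∈ closestPoints (geodSet f L) z, ∀ w' ∈ closestPoints (geodSet f L) z',
      dist w w' ≤ R + 6 * δ := by
  intro w hw w' hw'
  have h1 := closest_point_dist_lower δ hδ hgeo hslim f L hf z w hw w' hw'.1
  have h2 := closest_point_dist_lower δ hδ hgeo hslim f L hf z' w' hw' w hw.1
  have t1 : dist z w' ≤ dist z z' + dist z' w' := dist_triangle _ _ _
  have t2 : dist z' w ≤ dist z' z + dist z w := dist_triangle _ _ _
  have t3 : dist z' z = dist z z' := dist_comm _ _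
  have t4 : dist w' w = dist w w' := dist_comm _ _
  linarith
end

section
/- Let X be a δ-hyperbolic geodesic metric space, let k = [x,y] and k' = [x',y'] be geodesic segments with d(x,x') ≤ R and d(y,y') ≤ R, and let z ∈ X. Then d(ρ_k(z), ρ_{k'}(z)) ≤ R + 11δ. -/
open Metric Set

/-! A point of `k` that is `δ`-almost as close to `z` as the projection `w` lies within `6δ` of
`w` (look at the midpoint of the segment between them in the triangle they span with `z`).
Hence every geodesic from a point `u ∈ k` to `z` passes within `7δ` of `w`, at distance
`d(z, w)` from `z`. Two slim triangles in the quadrilateral `x, y, y', x'` put every point of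
`k'` within `R + 2δ` of `k`, and vice versa, so `d(z, w') ≤ d(z, w) + R + 2δ`. Choosing `u ∈ k`
within `R + 2δ` of `w'`, the point where `[u, z]` passes near `w` is `δ`-close to `[z, w']` or to
`[w', u]`, and in both cases the estimates add up to at most `R + 11δ`. -/

namespace IsGeodesicOn

variable {X : Type*} [MetricSpace X] {g : ℝ → X} {L : ℝ}

lemma dist_zero_apply (hg : IsGeodesicOn g L) {t : ℝ} (ht : t ∈ Icc 0 L) :
    dist (g 0) (g t) = t := by
  rw [hg.2 0 ⟨le_rfl, hg.1⟩ t ht, zero_sub, abs_neg, abs_of_nonneg ht.1]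

lemma dist_apply_end (hg : IsGeodesicOn g L) {t : ℝ} (ht : t ∈ Icc 0 L) :
    dist (g t) (g L) = L - t := by
  rw [hg.2 t ht L ⟨hg.1, le_rfl⟩, abs_sub_comm, abs_of_nonneg (sub_nonneg.2 ht.2)]

lemma dist_add_dist_of_mem (hg : IsGeodesicOn g L) {p : X} (hp : p ∈ geodSet g L) :
    dist (g 0) p + dist p (g L) = L := by
  obtain ⟨t, ht, rfl⟩ := hp
  rw [hg.dist_zero_apply ht, hg.dist_apply_end ht]
  ring

lemma exists_mem_dist_eq (hg : IsGeodesicOn g L) {r : ℝ} (hr : r ∈ Icc 0 L) :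
    ∃ m ∈ geodSet g L, dist (g 0) m = r ∧ dist m (g L) = L - r :=
  ⟨g r, mem_image_of_mem g hr, hg.dist_zero_apply hr, hg.dist_apply_end hr⟩

lemma exists_subsegment (hg : IsGeodesicOn g L) {a b : ℝ} (ha : a ∈ Icc 0 L)
    (hb : b ∈ Icc 0 L) :
    ∃ g' : ℝ → X, IsGeodesicOn g' (dist (g a) (g b)) ∧ g' 0 = g a ∧
      g' (dist (g a) (g b)) = g b ∧ geodSet g' (dist (g a) (g b)) ⊆ geodSet g L := by
  obtain ⟨ha0, haL⟩ := ha
  obtain ⟨hb0, hbL⟩ := hb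
  have hab := hg.2 a ⟨ha0, haL⟩ b ⟨hb0, hbL⟩
  rcases le_total a b with hle | hle
  · rw [hab, abs_sub_comm, abs_of_nonneg (sub_nonneg.2 hle)]
    refine ⟨fun t => g (a + t), ⟨by linarith, fun s hs t ht => ?_⟩, by simp, by simp, ?_⟩
    · rw [hg.2 (a + s) ⟨by linarith [hs.1], by linarith [hs.2]⟩
        (a + t) ⟨by linarith [ht.1], by linarith [ht.2]⟩, add_sub_add_left_eq_sub]
    · rintro _ ⟨t, ht, rfl⟩
      exact ⟨a + t, ⟨by linarith [ht.1], by linarith [ht.2]⟩, rfl⟩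
  · rw [hab, abs_of_nonneg (sub_nonneg.2 hle)]
    refine ⟨fun t => g (a - t), ⟨by linarith, fun s hs t ht => ?_⟩, by simp, by simp, ?_⟩
    · rw [hg.2 (a - s) ⟨by linarith [hs.2], by linarith [hs.1]⟩
        (a - t) ⟨by linarith [ht.2], by linarith [ht.1]⟩, sub_sub_sub_cancel_left, abs_sub_comm]
    · rintro _ ⟨t, ht, rfl⟩
      exact ⟨a - t, ⟨by linarith [ht.2], by linarith [ht.1]⟩, rfl⟩

end IsGeodesicOn

namespace SlimTriangles

variable {X : Type*} [MetricSpace X] {δ : ℝ}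

lemma exists_near_between_or_mem (hgeo : GeodesicSpace X) (hslim : SlimTriangles X δ)
    {g g' : ℝ → X} {L L' : ℝ} (hg : IsGeodesicOn g L) (hg' : IsGeodesicOn g' L')
    (hjoin : g' L' = g 0) {p : X} (hp : p ∈ geodSet g L) :
    ∃ q, dist p q ≤ δ ∧
      (dist (g L) q + dist q (g' 0) = dist (g L) (g' 0) ∨ q ∈ geodSet g' L') := by
  obtain ⟨g₂, hg₂, hg₂0, hg₂1⟩ := hgeo (g L) (g' 0)
  obtain ⟨q, hq, hpq⟩ := (hslim g g₂ g' _ _ _ hg hg₂ hg' hg₂0.symm hg₂1 hjoin).1 p hp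
  refine ⟨q, hpq, hq.imp (fun hq => ?_) id⟩
  simpa only [hg₂0, hg₂1] using hg₂.dist_add_dist_of_mem hq

lemma exists_near_between (hgeo : GeodesicSpace X) (hslim : SlimTriangles X δ)
    {g : ℝ → X} {L : ℝ} (hg : IsGeodesicOn g L) (c : X) {p : X} (hp : p ∈ geodSet g L) :
    ∃ q, dist p q ≤ δ ∧ (dist (g L) q + dist q c = dist (g L) c ∨
      dist c q + dist q (g 0) = dist c (g 0)) := by
  obtain ⟨g', hg', hg'0, hg'1⟩ := hgeo c (g 0)
  obtain ⟨q, hpq, hq⟩ := exists_near_between_or_mem hgeo hslim hg hg' hg'1 hp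
  refine ⟨q, hpq, ?_⟩
  rw [hg'0] at hq
  refine hq.imp id (fun hq => ?_)
  simpa only [hg'0, hg'1] using hg'.dist_add_dist_of_mem hq

lemma dist_le_of_almost_closest (hgeo : GeodesicSpace X) (hslim : SlimTriangles X δ)
    {f : ℝ → X} {L : ℝ} (hf : IsGeodesicOn f L) {z w v : X}
    (hw : w ∈ closestPoints (geodSet f L) z) (hv : v ∈ geodSet f L)
    (hzv : dist z v ≤ dist z w + δ) : dist w v ≤ 6 * δ := by
  obtain ⟨⟨a, ha, rfl⟩, hmin⟩ := hw
  obtain ⟨b, hb, rfl⟩ := hv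
  obtain ⟨g, hg, hg0, hg1, hsub⟩ := hf.exists_subsegment ha hb
  obtain ⟨m, hm, hwm, hmv⟩ :=
    hg.exists_mem_dist_eq (r := dist (f a) (f b) / 2) 
      ⟨by positivity, by linarith [dist_nonneg (x := f a) (y := f b)]⟩
  obtain ⟨q, hmq, hq⟩ := exists_near_between hgeo hslim hg z hm
  rw [hg0] at hwm hq
  rw [hg1] at hmv hq
  have hzm := hmin m (hsub hm)
  rcases hq with hq | hq
  · linarith [dist_triangle z q m, dist_triangle m q (f b), dist_comm z (f b), dist_comm q z,
      dist_comm q m, dist_comm q (f b)]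
  · linarith [dist_triangle z q m, dist_triangle m q (f a), dist_comm q m, dist_comm m (f a),
      dist_nonneg (x := m) (y := q)]

lemma exists_near_closestPoint_on_geodesic (hgeo : GeodesicSpace X) (hslim : SlimTriangles X δ)
    {f : ℝ → X} {L : ℝ} (hf : IsGeodesicOn f L) {z w u : X}
    (hw : w ∈ closestPoints (geodSet f L) z) (hu : u ∈ geodSet f L) {h : ℝ → X} {ℓ : ℝ}
    (hh : IsGeodesicOn h ℓ) (hh0 : h 0 = u) (hh1 : h ℓ = z) :
    ∃ m ∈ geodSet h ℓ, dist z m = dist z w ∧ dist m w ≤ 7 * δ := by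
  obtain ⟨⟨a, ha, rfl⟩, hmin⟩ := hw
  obtain ⟨b, hb, rfl⟩ := hu
  have hℓ : dist (f b) z = ℓ := by
    simpa only [hh0, hh1] using hh.dist_zero_apply ⟨hh.1, le_rfl⟩
  have hzw : dist z (f a) ≤ ℓ := by
    rw [← hℓ, dist_comm (f b)]
    exact hmin _ ⟨b, hb, rfl⟩
  obtain ⟨m, hm, -, hmz⟩ :=
    hh.exists_mem_dist_eq (r := ℓ - dist z (f a))
      ⟨by linarith, by linarith [dist_nonneg (x := z) (y := f a)]⟩
  rw [hh1, sub_sub_cancel, dist_comm] at hmz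
  refine ⟨m, hm, hmz, ?_⟩
  obtain ⟨g, hg, hg0, hg1, hsub⟩ := hf.exists_subsegment ha hb
  obtain ⟨q, hmq, hq⟩ := exists_near_between_or_mem hgeo hslim hh hg (hg1.trans hh0.symm) hm
  rw [hh1, hg0] at hq
  rcases hq with hq | hq
  · linarith [dist_triangle m q (f a), dist_triangle z q m, dist_comm q m,
      dist_nonneg (x := m) (y := q)]
  · have hzq : dist z q ≤ dist z (f a) + δ := by linarith [dist_triangle z m q]
    have := dist_le_of_almost_closest hgeo hslim hf ⟨⟨a, ha, rfl⟩, hmin⟩ (hsub hq) hzq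
    linarith [dist_triangle m q (f a), dist_comm q (f a)]

lemma exists_near_of_endpoints_near (hgeo : GeodesicSpace X) (hslim : SlimTriangles X δ)
    {f f' : ℝ → X} {L L' R : ℝ} (hf : IsGeodesicOn f L) (hf' : IsGeodesicOn f' L')
    (hx : dist (f 0) (f' 0) ≤ R) (hy : dist (f L) (f' L') ≤ R) {p : X}
    (hp : p ∈ geodSet f' L') : ∃ q ∈ geodSet f L, dist p q ≤ R + 2 * δ := by
  obtain ⟨g, hg, hg0, hg1⟩ := hgeo (f L) (f' 0)
  obtain ⟨q₁, hpq₁, hq₁⟩ := exists_near_between_or_mem hgeo hslim hf' hg hg1 hp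
  rw [hg0] at hq₁
  rcases hq₁ with hq₁ | hq₁
  · refine ⟨f L, ⟨L, ⟨hf.1, le_rfl⟩, rfl⟩, ?_⟩
    linarith [dist_triangle p q₁ (f L), dist_nonneg (x := f' L') (y := q₁),
      dist_comm (f L) (f' L'), dist_nonneg (x := p) (y := q₁)]
  obtain ⟨q₂, hq₁q₂, hq₂⟩ := exists_near_between_or_mem hgeo hslim hg hf hg0.symm hq₁
  rw [hg1] at hq₂
  rcases hq₂ with hq₂ | hq₂
  · refine ⟨f 0, ⟨0, ⟨le_rfl, hf.1⟩, rfl⟩, ?_⟩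
    linarith [dist_triangle4 p q₁ q₂ (f 0), dist_nonneg (x := f' 0) (y := q₂),
      dist_comm (f 0) (f' 0)]
  · exact ⟨q₂, hq₂, by linarith [dist_triangle p q₁ q₂, dist_nonneg.trans hx]⟩

end SlimTriangles

open SlimTriangles in
theorem closestPoints_move_geodesic_general {X : Type*} [MetricSpace X] (δ : ℝ)
    (hgeo : GeodesicSpace X) (hslim : SlimTriangles X δ)
    (x y x' y' : X) (f f' : ℝ → X) (L L' : ℝ)
    (hf : IsGeodesicOn f L) (hfx : f 0 = x) (hfy : f L = y)
    (hf' : IsGeodesicOn f' L') (hfx' : f' 0 = x') (hfy' : f' L' = y')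
    (R : ℝ) (hx : dist x x' ≤ R) (hy : dist y y' ≤ R) (z : X) :
    ∀ w ∈ closestPoints (geodSet f L) z, ∀ w' ∈ closestPoints (geodSet f' L') z,
      dist w w' ≤ R + 11 * δ := by
  intro w hw w' hw'
  subst hfx hfy hfx' hfy'
  obtain ⟨u, hu, hw'u⟩ := exists_near_of_endpoints_near hgeo hslim hf hf' hx hy hw'.1
  obtain ⟨v', hv', hwv'⟩ := exists_near_of_endpoints_near hgeo hslim hf' hf
    ((dist_comm _ _).trans_le hx) ((dist_comm _ _).trans_le hy) hw.1
  have hzw' : dist z w' ≤ dist z w + (R + 2 * δ) :=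
    (hw'.2 v' hv').trans (by linarith [dist_triangle z w v'])
  obtain ⟨h, hh, hh0, hh1⟩ := hgeo u z
  obtain ⟨m, hm, hzm, hmw⟩ :=
    exists_near_closestPoint_on_geodesic hgeo hslim hf hw hu hh hh0 hh1
  obtain ⟨q, hmq, hq⟩ := exists_near_between hgeo hslim hh w' hm
  rw [hh0, hh1] at hq
  have hww' : dist w w' ≤ 8 * δ + dist q w' := by
    linarith [dist_triangle4 w m q w', dist_comm w m]
  rcases hq with hq | hq
  · linarith [dist_triangle z q m, dist_comm q m]
  · linarith [dist_comm w' u, dist_comm q w', dist_nonneg (x := q) (y := u),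
      dist_nonneg (x := m) (y := q)]

/-- In a `δ`-hyperbolic geodesic metric space, if `k = [x,y]` and
`k' = [x',y']` are geodesics with `d(x,x') ≤ R` and `d(y,y') ≤ R`, then for any
point `z` the closest-point projections of `z` to `k` and to `k'` are at
distance at most `R + 11δ` from each other. -/
theorem closestPoints_move_geodesic {X : Type*} [MetricSpace X] (δ : ℝ) (hδ : 0 ≤ δ)
    (hgeo : GeodesicSpace X) (hslim : SlimTriangles X δ)
    (x y x' y' : X) (f f' : ℝ → X) (L L' : ℝ)
    (hf : IsGeodesicOn f L) (hfx : f 0 = x) (hfy : f L = y)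
    (hf' : IsGeodesicOn f' L') (hfx' : f' 0 = x') (hfy' : f' L' = y')
    (R : ℝ) (hx : dist x x' ≤ R) (hy : dist y y' ≤ R) (z : X) :
    ∀ w ∈ closestPoints (geodSet f L) z, ∀ w' ∈ closestPoints (geodSet f' L') z,
      dist w w' ≤ R + 11 * δ :=
  closestPoints_move_geodesic_general δ hgeo hslim x y x' y' f f' L L' hf hfx hfy hf' hfx' hfy' R hx
    hy z
end

section
/- Let X be a geodesic metric space, M ≥ 0, and suppose for every pair of points x, y ∈ X there is a connected set g_{x,y} containing x and y such that g_{x,y} is contained in the M-neighborhood of g_{y,z} ∪ g_{z,x} for all z. Fix a path γ : [0,N] → X. For a binary string ω let I_ω be the dyadic subinterval of [0,N] obtained by taking halves according to ω (I_ε = [0,N], I_{ω0} and I_{ω1} the first and second halves of I_ω), and let g_ω = g_{γ(a),γ(b)} where I_ω = [a,b]. Then for every binary string ω with |ω| ≤ ⌈log₂ N⌉ and every point x ∈ g_ω, there exists b ∈ I_ω with d(x, γ(b)) ≤ M(⌈log₂ N⌉ − |ω|) + 2M, provided that whenever |I_ω| ≤ 1 the set g_ω has diameter at most M. -/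
/-- The dyadic subinterval of `[a, b]` determined by a binary string, read left
to right: `[]` gives `[a, b]`; prefixing with `false` (resp. `true`) takes the
first (resp. second) half.  Thus `I_{ω0} = dyadicInterval a b (ω ++ [false])`
and `I_{ω1} = dyadicInterval a b (ω ++ [true])` are the two halves of `I_ω`. -/
noncomputable def dyadicInterval (a b : ℝ) : List Bool → ℝ × ℝ
  | [] => (a, b)
  | (false :: ω) => dyadicInterval a ((a + b) / 2) ω
  | (true :: ω) => dyadicInterval ((a + b) / 2) b ω

/-- The set `g_ω = g_{γ(a), γ(b)}` where `I_ω = [a, b]` is the dyadic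
subinterval of `[0, N]` indexed by `ω`. -/
def gOf {X : Type*} (g : X → X → Set X) (γ : ℝ → X) (N : ℝ)
    (ω : List Bool) : Set X :=
  g (γ (dyadicInterval 0 N ω).1) (γ (dyadicInterval 0 N ω).2)

/-!
Downward induction on `|ω|`, for `g_{x,y} ∪ g_{y,x}` rather than `g_{x,y}`: the slim-triangle
axiom at the midpoint of `I_ω` puts each point of `g_ω` within `M` of a child set *with reversed
orientation*, so both orientations must be carried along, and each level costs `M`. At the bottom
the local axiom bounds only the correctly oriented sets: it handles `g_ω` itself (cost `M`), and
the reversed set after one more slim-triangle step into the two halves (cost `2M`).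
-/

open Set

section NearArc

variable {X : Type*} [PseudoMetricSpace X] {γ : ℝ → X} {a b r : ℝ} {S T : Set X}

def NearArc (γ : ℝ → X) (a b r : ℝ) (S : Set X) : Prop :=
  ∀ x ∈ S, ∃ c ∈ Icc a b, dist x (γ c) ≤ r

theorem NearArc.mono {a' b' r' : ℝ} (h : NearArc γ a b r S) (ha : a' ≤ a) (hb : b ≤ b')
    (hr : r ≤ r') : NearArc γ a' b' r' S := fun x hx =>
  let ⟨c, hc, hd⟩ := h x hx
  ⟨c, Icc_subset_Icc ha hb hc, hd.trans hr⟩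

theorem NearArc.union (hS : NearArc γ a b r S) (hT : NearArc γ a b r T) :
    NearArc γ a b r (S ∪ T) := by
  rintro x (hx | hx)
  exacts [hS x hx, hT x hx]

theorem NearArc.of_forall_exists_dist_le {M : ℝ} (hT : NearArc γ a b r T)
    (hST : ∀ x ∈ S, ∃ q ∈ T, dist x q ≤ M) : NearArc γ a b (r + M) S := by
  intro x hx
  obtain ⟨q, hqT, hxq⟩ := hST x hx
  obtain ⟨c, hc, hqc⟩ := hT q hqT
  exact ⟨c, hc, by linarith [dist_triangle x q (γ c)]⟩

theorem nearArc_of_forall_dist_le (hab : a ≤ b) (ha : γ a ∈ S)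
    (h : ∀ p ∈ S, ∀ q ∈ S, dist p q ≤ r) : NearArc γ a b r S :=
  fun x hx => ⟨a, left_mem_Icc.mpr hab, h x hx _ ha⟩

end NearArc

section SlimTriangles

variable {X : Type*} [PseudoMetricSpace X] {g : X → X → Set X} {M : ℝ}

theorem exists_dist_le_of_slim_symm
    (hslim : ∀ x y z, ∀ p ∈ g x y, ∃ q ∈ g y z ∪ g z x, dist p q ≤ M)
    {x y z p : X} (hp : p ∈ g x y ∪ g y x) :
    ∃ q ∈ (g x z ∪ g z x) ∪ (g z y ∪ g y z), dist p q ≤ M := by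
  rcases hp with hp | hp
  · obtain ⟨q, hq, hpq⟩ := hslim x y z p hp
    exact ⟨q, by rcases hq with hq | hq <;> simp [hq], hpq⟩
  · obtain ⟨q, hq, hpq⟩ := hslim y x z p hp
    exact ⟨q, by rcases hq with hq | hq <;> simp [hq], hpq⟩

variable {γ : ℝ → X} {a m b r : ℝ}

theorem NearArc.slim_step
    (hslim : ∀ x y z, ∀ p ∈ g x y, ∃ q ∈ g y z ∪ g z x, dist p q ≤ M)
    (ham : a ≤ m) (hmb : m ≤ b)
    (h₁ : NearArc γ a m r (g (γ a) (γ m) ∪ g (γ m) (γ a)))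
    (h₂ : NearArc γ m b r (g (γ m) (γ b) ∪ g (γ b) (γ m))) :
    NearArc γ a b (r + M) (g (γ a) (γ b) ∪ g (γ b) (γ a)) :=
  ((h₁.mono le_rfl hmb le_rfl).union (h₂.mono ham le_rfl le_rfl)).of_forall_exists_dist_le
    fun _ hp => exists_dist_le_of_slim_symm hslim hp

theorem NearArc.slim_base (hmem : ∀ x y, x ∈ g x y ∧ y ∈ g x y)
    (hslim : ∀ x y z, ∀ p ∈ g x y, ∃ q ∈ g y z ∪ g z x, dist p q ≤ M)
    (ham : a ≤ m) (hmb : m ≤ b)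
    (h : ∀ p ∈ g (γ a) (γ b), ∀ q ∈ g (γ a) (γ b), dist p q ≤ M)
    (h₁ : ∀ p ∈ g (γ a) (γ m), ∀ q ∈ g (γ a) (γ m), dist p q ≤ M)
    (h₂ : ∀ p ∈ g (γ m) (γ b), ∀ q ∈ g (γ m) (γ b), dist p q ≤ M) :
    NearArc γ a b (2 * M) (g (γ a) (γ b) ∪ g (γ b) (γ a)) := by
  have hM : 0 ≤ M := dist_self (γ a) ▸ h _ (hmem _ _).1 _ (hmem _ _).1
  have hfwd : NearArc γ a b M (g (γ a) (γ b)) :=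
    nearArc_of_forall_dist_le (ham.trans hmb) (hmem _ _).1 h
  have hhalves : NearArc γ a b M (g (γ a) (γ m) ∪ g (γ m) (γ b)) :=
    ((nearArc_of_forall_dist_le ham (hmem _ _).1 h₁).mono le_rfl hmb le_rfl).union
      ((nearArc_of_forall_dist_le hmb (hmem _ _).1 h₂).mono ham le_rfl le_rfl)
  have hrev : NearArc γ a b (M + M) (g (γ b) (γ a)) :=
    hhalves.of_forall_exists_dist_le fun p hp => hslim _ _ (γ m) p hp
  exact (hfwd.mono le_rfl le_rfl (by linarith)).union (hrev.mono le_rfl le_rfl (by linarith))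

end SlimTriangles

section Dyadic

theorem dyadicInterval_append (l : List Bool) : ∀ (ω : List Bool) (a b : ℝ),
    dyadicInterval a b (ω ++ l) =
      dyadicInterval (dyadicInterval a b ω).1 (dyadicInterval a b ω).2 l
  | [], _, _ => rfl
  | false :: ω, a, b => dyadicInterval_append l ω a ((a + b) / 2)
  | true :: ω, a, b => dyadicInterval_append l ω ((a + b) / 2) b

theorem dyadicInterval_snd_sub_fst : ∀ (ω : List Bool) (a b : ℝ),
    (dyadicInterval a b ω).2 - (dyadicInterval a b ω).1 = (b - a) / 2 ^ ω.length
  | [], a, b => by simp [dyadicInterval]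
  | false :: ω, a, b => by
    rw [dyadicInterval, dyadicInterval_snd_sub_fst ω, List.length_cons, pow_succ]; ring
  | true :: ω, a, b => by
    rw [dyadicInterval, dyadicInterval_snd_sub_fst ω, List.length_cons, pow_succ]; ring

theorem dyadicInterval_fst_le_snd {a b : ℝ} (hab : a ≤ b) (ω : List Bool) :
    (dyadicInterval a b ω).1 ≤ (dyadicInterval a b ω).2 := by
  have := dyadicInterval_snd_sub_fst ω a b
  have : 0 ≤ (b - a) / 2 ^ ω.length := by positivity
  linarith

theorem dyadicInterval_snd_sub_fst_le_one {N : ℕ} {ω : List Bool}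
    (hω : Nat.clog 2 N ≤ ω.length) :
    (dyadicInterval 0 N ω).2 - (dyadicInterval 0 N ω).1 ≤ 1 := by
  rw [dyadicInterval_snd_sub_fst, sub_zero, div_le_one (by positivity)]
  calc (N : ℝ) ≤ 2 ^ Nat.clog 2 N := by exact_mod_cast Nat.le_pow_clog one_lt_two N
    _ ≤ 2 ^ ω.length := pow_le_pow_right₀ one_le_two hω

theorem dyadicInterval_append_false (a b : ℝ) (ω : List Bool) :
    dyadicInterval a b (ω ++ [false]) = ((dyadicInterval a b ω).1,
      ((dyadicInterval a b ω).1 + (dyadicInterval a b ω).2) / 2) :=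
  dyadicInterval_append _ _ _ _

theorem dyadicInterval_append_true (a b : ℝ) (ω : List Bool) :
    dyadicInterval a b (ω ++ [true]) =
      (((dyadicInterval a b ω).1 + (dyadicInterval a b ω).2) / 2, (dyadicInterval a b ω).2) :=
  dyadicInterval_append _ _ _ _

end Dyadic

theorem nearArc_dyadicInterval {X : Type*} [PseudoMetricSpace X] {M : ℝ} {N : ℕ}
    {γ : ℝ → X} {g : X → X → Set X}
    (hmem : ∀ x y, x ∈ g x y ∧ y ∈ g x y)
    (hslim : ∀ x y z, ∀ p ∈ g x y, ∃ q ∈ g y z ∪ g z x, dist p q ≤ M)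
    (hlocal : ∀ ω : List Bool,
      (dyadicInterval 0 (N : ℝ) ω).2 - (dyadicInterval 0 (N : ℝ) ω).1 ≤ 1 →
      ∀ p ∈ gOf g γ (N : ℝ) ω, ∀ q ∈ gOf g γ (N : ℝ) ω, dist p q ≤ M)
    (n : ℕ) (ω : List Bool) (hω : ω.length + n = Nat.clog 2 N) :
    NearArc γ (dyadicInterval 0 N ω).1 (dyadicInterval 0 N ω).2 (M * n + 2 * M)
      (g (γ (dyadicInterval 0 N ω).1) (γ (dyadicInterval 0 N ω).2) ∪
        g (γ (dyadicInterval 0 N ω).2) (γ (dyadicInterval 0 N ω).1)) := by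
  induction n generalizing ω with
  | zero =>
    have hle := dyadicInterval_fst_le_snd (Nat.cast_nonneg N) ω
    have hloc (ω' : List Bool) (h : Nat.clog 2 N ≤ ω'.length) :=
      hlocal ω' (dyadicInterval_snd_sub_fst_le_one h)
    have h₁ := hloc (ω ++ [false])
      (by simp only [List.length_append, List.length_singleton]; omega)
    have h₂ := hloc (ω ++ [true])
      (by simp only [List.length_append, List.length_singleton]; omega)
    simp only [gOf, dyadicInterval_append_false, dyadicInterval_append_true] at h₁ h₂
    simpa only [Nat.cast_zero, mul_zero, zero_add] using
      NearArc.slim_base hmem hslim (by linarith) (by linarith) (hloc ω hω.ge) h₁ h₂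
  | succ n ih =>
    have hle := dyadicInterval_fst_le_snd (Nat.cast_nonneg N) ω
    have h₁ := ih (ω ++ [false])
      (by simp only [List.length_append, List.length_singleton]; omega)
    have h₂ := ih (ω ++ [true])
      (by simp only [List.length_append, List.length_singleton]; omega)
    simp only [dyadicInterval_append_false, dyadicInterval_append_true] at h₁ h₂
    exact (h₁.slim_step hslim (by linarith) (by linarith) h₂).mono le_rfl le_rfl
      (by push_cast; linarith)

theorem dyadic_subdivision_estimate_general {X : Type*} [MetricSpace X]
    (M : ℝ) (N : ℕ) (γ : ℝ → X)
    (g : X → X → Set X)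
    (hmem : ∀ x y, x ∈ g x y ∧ y ∈ g x y)
    (hslim : ∀ x y z, ∀ p ∈ g x y, ∃ q ∈ g y z ∪ g z x, dist p q ≤ M)
    (hlocal : ∀ ω : List Bool,
      (dyadicInterval 0 (N : ℝ) ω).2 - (dyadicInterval 0 (N : ℝ) ω).1 ≤ 1 →
      ∀ p ∈ gOf g γ (N : ℝ) ω, ∀ q ∈ gOf g γ (N : ℝ) ω, dist p q ≤ M) :
    ∀ ω : List Bool, ω.length ≤ Nat.clog 2 N →
      ∀ x ∈ gOf g γ (N : ℝ) ω,
        ∃ b ∈ Set.Icc (dyadicInterval 0 (N : ℝ) ω).1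
            (dyadicInterval 0 (N : ℝ) ω).2,
          dist x (γ b) ≤
            M * ((Nat.clog 2 N : ℝ) - (ω.length : ℝ)) + 2 * M := by
  intro ω hω x hx
  have := nearArc_dyadicInterval hmem hslim hlocal (Nat.clog 2 N - ω.length) ω (by omega) x
    (Or.inl hx)
  rwa [Nat.cast_sub hω] at this

/-- the inductive subdivision estimate.  In a metric space, given
`M ≥ 0`, connected sets `g x y ∋ x, y` satisfying the slim-triangles axiom, a
path `γ : [0, N] → X`, and assuming every `g_ω` associated to a dyadic interval
of length at most `1` has diameter at most `M`, then for every binary string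
`ω` with `|ω| ≤ ⌈log₂ N⌉` and every `x ∈ g_ω` there is `b ∈ I_ω` with
`d(x, γ(b)) ≤ M(⌈log₂ N⌉ − |ω|) + 2M`. -/
theorem dyadic_subdivision_estimate {X : Type*} [MetricSpace X]
    (M : ℝ) (hM : 0 ≤ M) (N : ℕ) (hN : 1 ≤ N) (γ : ℝ → X)
    (g : X → X → Set X)
    (hconn : ∀ x y, IsConnected (g x y))
    (hmem : ∀ x y, x ∈ g x y ∧ y ∈ g x y)
    (hslim : ∀ x y z, ∀ p ∈ g x y, ∃ q ∈ g y z ∪ g z x, dist p q ≤ M)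
    (hlocal : ∀ ω : List Bool,
      (dyadicInterval 0 (N : ℝ) ω).2 - (dyadicInterval 0 (N : ℝ) ω).1 ≤ 1 →
      ∀ p ∈ gOf g γ (N : ℝ) ω, ∀ q ∈ gOf g γ (N : ℝ) ω, dist p q ≤ M) :
    ∀ ω : List Bool, ω.length ≤ Nat.clog 2 N →
      ∀ x ∈ gOf g γ (N : ℝ) ω,
        ∃ b ∈ Set.Icc (dyadicInterval 0 (N : ℝ) ω).1
            (dyadicInterval 0 (N : ℝ) ω).2,
          dist x (γ b) ≤
            M * ((Nat.clog 2 N : ℝ) - (ω.length : ℝ)) + 2 * M :=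
  dyadic_subdivision_estimate_general M N γ g hmem hslim hlocal
end

section
/- Let X be a connected graph with unit edge lengths and suppose there is a constant M and for each pair of vertices x, y a connected subgraph g_{x,y} containing x and y satisfying the Local axiom (d(x,y) ≤ 1 implies diam g_{x,y} ≤ M) and the Slim-triangles axiom (g_{x,y} ⊆ N_M(g_{y,z} ∪ g_{z,x}) for all x,y,z). Then X is Gromov hyperbolic. -/
/-- A geodesic walk of length `n` in a graph `G`: a vertex sequence realizing
the graph distance between each pair of its points. -/
def IsGeodesicWalk {V : Type*} (G : SimpleGraph V) (f : ℕ → V) (n : ℕ) : Prop :=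
  ∀ i j : ℕ, i ≤ j → j ≤ n → G.dist (f i) (f j) = j - i

/-- A graph (with unit edge lengths) is Gromov hyperbolic: there is `δ ≥ 0`
such that every geodesic triangle is `δ`-slim — each side lies in the
`δ`-neighborhood of the union of the other two sides. -/
def GraphGromovHyperbolic {V : Type*} (G : SimpleGraph V) : Prop :=
  ∃ δ : ℝ, 0 ≤ δ ∧
    ∀ (k g h : ℕ → V) (nk ng nh : ℕ),
      IsGeodesicWalk G k nk → IsGeodesicWalk G g ng → IsGeodesicWalk G h nh →
      k nk = g 0 → g ng = h 0 → h nh = k 0 →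
      (∀ i ≤ nk, ∃ j, (j ≤ ng ∧ (G.dist (k i) (g j) : ℝ) ≤ δ) ∨
        (j ≤ nh ∧ (G.dist (k i) (h j) : ℝ) ≤ δ)) ∧
      (∀ i ≤ ng, ∃ j, (j ≤ nh ∧ (G.dist (g i) (h j) : ℝ) ≤ δ) ∨
        (j ≤ nk ∧ (G.dist (g i) (k j) : ℝ) ≤ δ)) ∧
      (∀ i ≤ nh, ∃ j, (j ≤ nk ∧ (G.dist (h i) (k j) : ℝ) ≤ δ) ∨
        (j ≤ ng ∧ (G.dist (h i) (g j) : ℝ) ≤ δ))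

/-!
Fix a geodesic `f` from `x` to `y`.  Splitting `f` at its midpoint and applying the
Slim-triangles axiom recursively puts `g x y` within `m (log₂ d(x, y) + 1)` of `f`.

This is bootstrapped to a uniform bound `R` by induction on `d(x, y)`.  Let `w ∈ g x y` be at
distance `D > R` from its closest point `f t`.  Two applications of the axiom move `w` by at
most `2m` onto the path joining the ends of the window `[t - 4D, t + 4D]`, or onto a path
joining that window to an end of `f` (the Local axiom rules out the degenerate paths at the
ends).  In the first case the logarithmic bound `m log D` is smaller than `D`; in the second
the induction hypothesis puts `w` within `R + 2m` of a point of `f` at distance at least `4D`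
from `f t`, contradicting the triangle inequality.

Conversely, being connected, `g x y` meets every sphere about `x` of radius at most `d(x, y)`,
so every point of `f` is within `2R` of `g x y`; one more application of the axiom makes
geodesic triangles `(3R + m)`-slim.
-/

open Filter SimpleGraph

theorem eventually_mul_add_lt_two_pow (m c : ℕ) : ∀ᶠ k : ℕ in atTop, m * (k + c) < 2 ^ k := by
  have h : Tendsto (fun k : ℕ => (m : ℝ) * ((k : ℝ) ^ 1 / 2 ^ k) + m * c * ((k : ℝ) ^ 0 / 2 ^ k))
      atTop (nhds 0) := by
    simpa using ((tendsto_pow_const_div_const_pow_of_one_lt 1 one_lt_two).const_mul (m : ℝ)).add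
      ((tendsto_pow_const_div_const_pow_of_one_lt 0 one_lt_two).const_mul ((m : ℝ) * c))
  filter_upwards [h.eventually (gt_mem_nhds one_pos)] with k hk
  have : (m : ℝ) * (k + c) < 2 ^ k := by
    have : (0 : ℝ) < 2 ^ k := by positivity
    field_simp at hk
    linarith
  exact_mod_cast this

/-- `8 * D` bounds the length of the window of radius `4 * D`, and `m * (n + 3)` is the
logarithmic bound on it plus the `2 * m` of two slim-triangle moves. -/
theorem exists_bootstrap_constant (m : ℕ) :
    ∃ R, 3 * m ≤ R ∧ ∀ D, R < D → ∃ n, 8 * D ≤ 2 ^ n ∧ m * (n + 3) < D := by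
  obtain ⟨K, hK⟩ := (eventually_mul_add_lt_two_pow m 7).exists_forall_of_atTop
  refine ⟨m * (K + 7), by nlinarith, fun D hD => ⟨Nat.log 2 D + 4, ?_, ?_⟩⟩
  · have := Nat.lt_pow_succ_log_self one_lt_two D
    rw [pow_succ] at this
    rw [pow_add]
    omega
  · show m * (Nat.log 2 D + 7) < D
    rcases le_total K (Nat.log 2 D) with hk | hk
    · have := Nat.pow_log_le_self 2 (x := D) (by omega)
      have := hK _ hk
      omega
    · calc m * (Nat.log 2 D + 7) ≤ m * (K + 7) := Nat.mul_le_mul_left _ (by omega)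
        _ < D := hD

section Graph

variable {V : Type*} {G : SimpleGraph V}

theorem SimpleGraph.Walk.exists_mem_support_dist_eq {a u v : V} (p : G.Walk u v) {t : ℕ}
    (hu : G.dist a u ≤ t) (hv : t ≤ G.dist a v) : ∃ w ∈ p.support, G.dist a w = t := by
  induction p with
  | nil => exact ⟨_, Walk.start_mem_support _, by omega⟩
  | @cons u u' _ h q ih =>
    by_cases hq : G.dist a u' ≤ t
    · obtain ⟨w, hw, rfl⟩ := ih hq hv
      exact ⟨w, by simp [hw], rfl⟩
    · have := h.diff_dist_adj (u := a)
      exact ⟨u, Walk.start_mem_support _, by omega⟩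

theorem SimpleGraph.exists_mem_dist_eq_of_induce_connected {s : Set V}
    (h : (G.induce s).Connected) {x y : V} (hx : x ∈ s) (hy : y ∈ s) {t : ℕ}
    (ht : t ≤ G.dist x y) : ∃ w ∈ s, G.dist x w = t := by
  obtain ⟨p⟩ := h.preconnected ⟨x, hx⟩ ⟨y, hy⟩
  obtain ⟨w, hw, hwt⟩ := (p.map (Embedding.induce s).toHom).exists_mem_support_dist_eq
    (a := x) (by simp) (by simpa using ht)
  rw [Walk.support_map, List.mem_map] at hw
  obtain ⟨w, -, rfl⟩ := hw
  exact ⟨w, w.2, hwt⟩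

theorem IsGeodesicWalk.dist_eq {f : ℕ → V} {L i j : ℕ} (hf : IsGeodesicWalk G f L)
    (hi : i ≤ L) (hj : j ≤ L) : G.dist (f i) (f j) = i - j + (j - i) := by
  rcases le_total i j with h | h
  · rw [hf i j h hj]
    omega
  · rw [SimpleGraph.dist_comm, hf j i h hi]
    omega

/-- The Local and Slim-triangles axioms with an integer constant `m`. -/
structure SlimFamily (G : SimpleGraph V) (g : V → V → Set V) (m : ℕ) : Prop where
  symm : ∀ x y, g x y = g y x
  left_mem : ∀ x y, x ∈ g x y
  dist_le_of_dist_le_one : ∀ x y, G.dist x y ≤ 1 → ∀ u ∈ g x y, ∀ v ∈ g x y, G.dist u v ≤ m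
  slim : ∀ x y z, ∀ w ∈ g x y, ∃ u ∈ g y z ∪ g z x, G.dist w u ≤ m

namespace SlimFamily

variable {g : V → V → Set V} {m : ℕ} {f : ℕ → V} {L : ℕ}

theorem right_mem (hg : SlimFamily G g m) (x y : V) : y ∈ g x y :=
  hg.symm x y ▸ hg.left_mem y x

theorem dist_le_of_mem_self (hg : SlimFamily G g m) {x u : V} (hu : u ∈ g x x) :
    G.dist u x ≤ m :=
  hg.dist_le_of_dist_le_one x x (by simp) u hu x (hg.left_mem x x)

theorem exists_mem_quadrilateral (hg : SlimFamily G g m) (hG : G.Connected) {x y w : V}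
    (hw : w ∈ g x y) (z₁ z₂ : V) : ∃ v ∈ g x z₁ ∪ g z₁ z₂ ∪ g z₂ y, G.dist w v ≤ 2 * m := by
  obtain ⟨u, hu | hu, hwu⟩ := hg.slim x y z₁ w hw
  · obtain ⟨v, hv, huv⟩ := hg.slim y z₁ z₂ u hu
    have := hG.dist_triangle (u := w) (v := u) (w := v)
    refine ⟨v, ?_, by omega⟩
    rcases hv with hv | hv
    · exact .inl (.inr hv)
    · exact .inr (hg.symm z₂ y ▸ hv)
  · exact ⟨u, .inl (.inl (hg.symm z₁ x ▸ hu)), by omega⟩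

theorem exists_dist_le_mul_of_sub_le_two_pow (hg : SlimFamily G g m) (hG : G.Connected)
    (hf : IsGeodesicWalk G f L) (n : ℕ) {a b : ℕ} (hab : a ≤ b) (hbL : b ≤ L)
    (hn : b - a ≤ 2 ^ n) {w : V} (hw : w ∈ g (f a) (f b)) :
    ∃ j ∈ Set.Icc a b, G.dist w (f j) ≤ m * (n + 1) := by
  induction n generalizing a b w with
  | zero =>
    have hab1 : G.dist (f a) (f b) ≤ 1 := by
      rw [hf a b hab hbL]
      simpa using hn
    refine ⟨a, ⟨le_rfl, hab⟩, ?_⟩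
    simpa using hg.dist_le_of_dist_le_one _ _ hab1 w hw (f a) (hg.left_mem _ _)
  | succ n ih =>
    rw [pow_succ] at hn
    obtain ⟨u, hu, hwu⟩ := hg.slim _ _ (f ((a + b) / 2)) w hw
    obtain ⟨j, hj, huj⟩ : ∃ j ∈ Set.Icc a b, G.dist u (f j) ≤ m * (n + 1) := by
      rcases hu with hu | hu
      · obtain ⟨j, hj, huj⟩ := ih (a := (a + b) / 2) (by omega) hbL (by omega) (hg.symm _ _ ▸ hu)
        exact ⟨j, Set.Icc_subset_Icc (by omega) le_rfl hj, huj⟩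
      · obtain ⟨j, hj, huj⟩ := ih (b := (a + b) / 2) (by omega) (by omega) (by omega)
          (hg.symm _ _ ▸ hu)
        exact ⟨j, Set.Icc_subset_Icc le_rfl (by omega) hj, huj⟩
    refine ⟨j, hj, ?_⟩
    calc G.dist w (f j) ≤ G.dist w u + G.dist u (f j) := hG.dist_triangle
      _ ≤ m * (n + 1 + 1) := by nlinarith

theorem exists_near_window_or_end (hg : SlimFamily G g m) (hG : G.Connected) {a b : ℕ}
    (t r : ℕ) {w : V} (hw : w ∈ g (f a) (f b)) (ha : 3 * m < G.dist w (f a))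
    (hb : 3 * m < G.dist w (f b)) :
    ∃ v, G.dist w v ≤ 2 * m ∧ (v ∈ g (f (max a (t - r))) (f (min b (t + r))) ∨
      a + r ≤ t ∧ v ∈ g (f a) (f (t - r)) ∨ t + r ≤ b ∧ v ∈ g (f (t + r)) (f b)) := by
  obtain ⟨v, hv, hwv⟩ :=
    hg.exists_mem_quadrilateral hG hw (f (max a (t - r))) (f (min b (t + r)))
  have hnot : ∀ x, 3 * m < G.dist w x → v ∉ g x x := fun x hx hvx => by
    have := hG.dist_triangle (u := w) (v := v) (w := x)
    have := hg.dist_le_of_mem_self hvx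
    omega
  refine ⟨v, hwv, ?_⟩
  rcases hv with (hv | hv) | hv
  · by_cases h : a + r ≤ t
    · rw [max_eq_right (by omega)] at hv
      exact .inr (.inl ⟨h, hv⟩)
    · rw [max_eq_left (by omega)] at hv
      exact absurd hv (hnot _ ha)
  · exact .inl hv
  · by_cases h : t + r ≤ b
    · rw [min_eq_right (by omega)] at hv
      exact .inr (.inr ⟨h, hv⟩)
    · rw [min_eq_left (by omega)] at hv
      exact absurd hv (hnot _ hb)

theorem exists_dist_le_of_mem (hg : SlimFamily G g m) (hG : G.Connected)
    (hf : IsGeodesicWalk G f L) {R : ℕ} (hmR : 3 * m ≤ R)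
    (hR : ∀ D, R < D → ∃ n, 8 * D ≤ 2 ^ n ∧ m * (n + 3) < D) {a b : ℕ} (hab : a ≤ b)
    (hbL : b ≤ L) {w : V} (hw : w ∈ g (f a) (f b)) :
    ∃ j ∈ Set.Icc a b, G.dist w (f j) ≤ R := by
  induction hk : b - a using Nat.strong_induction_on generalizing a b w with
  | _ k ih =>
  obtain ⟨t, ht, hmin⟩ := Finset.exists_min_image (Finset.Icc a b) (fun j => G.dist w (f j))
    ⟨a, by simp [hab]⟩
  rw [Finset.mem_Icc] at ht
  refine ⟨t, ht, ?_⟩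
  by_contra! hD
  set D := G.dist w (f t)
  have hmin' : ∀ j, a ≤ j → j ≤ b → D ≤ G.dist w (f j) := fun j h₁ h₂ =>
    hmin j (Finset.mem_Icc.2 ⟨h₁, h₂⟩)
  have hsep : ∀ j ≤ L, j - t + (t - j) ≤ G.dist w (f j) + D := fun j hj =>
    calc j - t + (t - j) = G.dist (f j) (f t) := (hf.dist_eq hj (by omega)).symm
      _ ≤ G.dist (f j) w + G.dist w (f t) := hG.dist_triangle
      _ = G.dist w (f j) + D := by rw [SimpleGraph.dist_comm]
  obtain ⟨v, hwv, hv | ⟨hta, hv⟩ | ⟨htb, hv⟩⟩ := hg.exists_near_window_or_end hG t (4 * D) hw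
    (by have := hmin' a le_rfl hab; omega) (by have := hmin' b hab le_rfl; omega)
  · obtain ⟨n, hDn, hmn⟩ := hR D hD
    obtain ⟨j, ⟨hj₁, hj₂⟩, hvj⟩ :=
      hg.exists_dist_le_mul_of_sub_le_two_pow hG hf n (by omega) (by omega) (by omega) hv
    have := hG.dist_triangle (u := w) (v := v) (w := f j)
    have := hmin' j (by omega) (by omega)
    have : m * (n + 3) = m * (n + 1) + 2 * m := by ring
    omega
  · obtain ⟨j, ⟨-, hj⟩, hvj⟩ := ih _ (by omega) (by omega) (by omega) hv rfl
    have := hG.dist_triangle (u := w) (v := v) (w := f j)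
    have := hsep j (by omega)
    omega
  · obtain ⟨j, ⟨hj, hjb⟩, hvj⟩ := ih _ (by omega) (by omega) hbL hv rfl
    have := hG.dist_triangle (u := w) (v := v) (w := f j)
    have := hsep j (by omega)
    omega

theorem exists_mem_dist_le (hg : SlimFamily G g m) (hG : G.Connected)
    (hconn : ∀ x y, (G.induce (g x y)).Connected) (hf : IsGeodesicWalk G f L) {R : ℕ}
    (hmR : 3 * m ≤ R) (hR : ∀ D, R < D → ∃ n, 8 * D ≤ 2 ^ n ∧ m * (n + 3) < D) {t : ℕ}
    (ht : t ≤ L) : ∃ v ∈ g (f 0) (f L), G.dist (f t) v ≤ 2 * R := by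
  obtain ⟨v, hv, hvt⟩ := exists_mem_dist_eq_of_induce_connected (hconn _ _) (hg.left_mem _ _)
    (hg.right_mem _ _) (t := t) (by rw [hf 0 L (Nat.zero_le L) le_rfl]; omega)
  obtain ⟨j, ⟨-, hj⟩, hvj⟩ := hg.exists_dist_le_of_mem hG hf hmR hR (Nat.zero_le L) le_rfl hv
  have hjt : t - j + (j - t) ≤ R := by
    have h0j := hf 0 j (Nat.zero_le j) hj
    have := hG.dist_triangle (u := f 0) (v := v) (w := f j)
    have := hG.dist_triangle (u := f 0) (v := f j) (w := v)
    rw [SimpleGraph.dist_comm (u := f j)] at this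
    omega
  refine ⟨v, hv, ?_⟩
  calc G.dist (f t) v ≤ G.dist (f t) (f j) + G.dist (f j) v := hG.dist_triangle
    _ ≤ R + R := by rw [hf.dist_eq ht hj, SimpleGraph.dist_comm]; omega
    _ = 2 * R := by ring

theorem exists_dist_le_of_isGeodesicWalk_triangle (hg : SlimFamily G g m) (hG : G.Connected)
    (hconn : ∀ x y, (G.induce (g x y)).Connected) {R : ℕ} (hmR : 3 * m ≤ R)
    (hR : ∀ D, R < D → ∃ n, 8 * D ≤ 2 ^ n ∧ m * (n + 3) < D) {s₁ s₂ s₃ : ℕ → V}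
    {n₁ n₂ n₃ : ℕ} (h₁ : IsGeodesicWalk G s₁ n₁) (h₂ : IsGeodesicWalk G s₂ n₂)
    (h₃ : IsGeodesicWalk G s₃ n₃) (e₁ : s₁ n₁ = s₂ 0) (e₂ : s₂ n₂ = s₃ 0) (e₃ : s₃ n₃ = s₁ 0) :
    ∀ i ≤ n₁, ∃ j, (j ≤ n₂ ∧ (G.dist (s₁ i) (s₂ j) : ℝ) ≤ (3 * R + m : ℕ)) ∨
      (j ≤ n₃ ∧ (G.dist (s₁ i) (s₃ j) : ℝ) ≤ (3 * R + m : ℕ)) := by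
  intro i hi
  obtain ⟨v, hv, hiv⟩ := hg.exists_mem_dist_le hG hconn h₁ hmR hR hi
  obtain ⟨u, hu | hu, hvu⟩ := hg.slim _ _ (s₂ n₂) v hv
  · rw [e₁] at hu
    obtain ⟨j, ⟨-, hj⟩, huj⟩ := hg.exists_dist_le_of_mem hG h₂ hmR hR (Nat.zero_le n₂) le_rfl hu
    have := hG.dist_triangle (u := s₁ i) (v := v) (w := u)
    have := hG.dist_triangle (u := s₁ i) (v := u) (w := s₂ j)
    exact ⟨j, .inl ⟨hj, by exact_mod_cast (by omega : G.dist (s₁ i) (s₂ j) ≤ 3 * R + m)⟩⟩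
  · rw [e₂, ← e₃] at hu
    obtain ⟨j, ⟨-, hj⟩, huj⟩ := hg.exists_dist_le_of_mem hG h₃ hmR hR (Nat.zero_le n₃) le_rfl hu
    have := hG.dist_triangle (u := s₁ i) (v := v) (w := u)
    have := hG.dist_triangle (u := s₁ i) (v := u) (w := s₃ j)
    exact ⟨j, .inr ⟨hj, by exact_mod_cast (by omega : G.dist (s₁ i) (s₃ j) ≤ 3 * R + m)⟩⟩

end SlimFamily

end Graph

theorem hyperbolicity_criterion_general {V : Type*} (G : SimpleGraph V)
    (hG : G.Connected) (M : ℝ)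
    (g : V → V → Set V)
    (hsymm : ∀ x y, g x y = g y x)
    (hmem : ∀ x y, x ∈ g x y ∧ y ∈ g x y)
    (hconn : ∀ x y, (G.induce (g x y)).Connected)
    (hlocal : ∀ x y, G.dist x y ≤ 1 →
      ∀ u ∈ g x y, ∀ v ∈ g x y, (G.dist u v : ℝ) ≤ M)
    (hslim : ∀ x y z, ∀ w ∈ g x y,
      ∃ u ∈ g y z ∪ g z x, (G.dist w u : ℝ) ≤ M) :
    GraphGromovHyperbolic G := by
  have hceil : ∀ {d : ℕ}, (d : ℝ) ≤ M → d ≤ ⌈M⌉₊ := fun h => Nat.cast_le.1 (h.trans (Nat.le_ceil M))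
  have hg : SlimFamily G g ⌈M⌉₊ :=
    { symm := hsymm
      left_mem := fun x y => (hmem x y).1
      dist_le_of_dist_le_one := fun x y hxy u hu v hv => hceil (hlocal x y hxy u hu v hv)
      slim := fun x y z w hw =>
        let ⟨u, hu, hwu⟩ := hslim x y z w hw
        ⟨u, hu, hceil hwu⟩ }
  obtain ⟨R, hmR, hR⟩ := exists_bootstrap_constant ⌈M⌉₊
  refine ⟨(3 * R + ⌈M⌉₊ : ℕ), Nat.cast_nonneg _, ?_⟩
  intro s₁ s₂ s₃ n₁ n₂ n₃ h₁ h₂ h₃ e₁ e₂ e₃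
  exact ⟨hg.exists_dist_le_of_isGeodesicWalk_triangle hG hconn hmR hR h₁ h₂ h₃ e₁ e₂ e₃,
    hg.exists_dist_le_of_isGeodesicWalk_triangle hG hconn hmR hR h₂ h₃ h₁ e₂ e₃ e₁,
    hg.exists_dist_le_of_isGeodesicWalk_triangle hG hconn hmR hR h₃ h₁ h₂ e₃ e₁ e₂⟩

/-- Masur–Schleimer hyperbolicity criterion, Theorem 3.6: let
`X` be a connected graph with unit edge lengths, `M ≥ 0`, and for each
(unordered) pair of vertices `x, y` a connected subgraph `g x y` containing
`x` and `y`, satisfying the Local axiom (`d(x,y) ≤ 1` implies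
`diam (g x y) ≤ M`) and the Slim-triangles axiom
(`g x y ⊆ N_M (g y z ∪ g z x)`).  Then `X` is Gromov hyperbolic. -/
theorem hyperbolicity_criterion {V : Type*} (G : SimpleGraph V)
    (hG : G.Connected) (M : ℝ) (hM : 0 ≤ M)
    (g : V → V → Set V)
    (hsymm : ∀ x y, g x y = g y x)
    (hmem : ∀ x y, x ∈ g x y ∧ y ∈ g x y)
    (hconn : ∀ x y, (G.induce (g x y)).Connected)
    (hlocal : ∀ x y, G.dist x y ≤ 1 →
      ∀ u ∈ g x y, ∀ v ∈ g x y, (G.dist u v : ℝ) ≤ M)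
    (hslim : ∀ x y z, ∀ w ∈ g x y,
      ∃ u ∈ g y z ∪ g z x, (G.dist w u : ℝ) ≤ M) :
    GraphGromovHyperbolic G :=
  hyperbolicity_criterion_general G hG M g hsymm hmem hconn hlocal hslim
end
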